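/- arXiv:1202.2803 — 5 statements merged into one kernel-verified Lean document; each statement's English description precedes it below -/
import Mathlib

section
/- Let γ_{f_i}, γ_{g_i} (i = 1,…,N) be mutually independent exponential random variables with means σ_{f_i}², σ_{g_i}², and let r = argmax_i min{γ_{f_i}, γ_{g_i}}. Then for all γ ≥ 0, P(γ_{f_r} ≤ γ) = ∏_{i=1}^N (1 − e^{−(1/σ_{f_i}²+1/σ_{g_i}²)γ}) − Σ_{j=1}^N (1/σ_{g_j}²) e^{−γ/σ_{f_j}²} ∫_0^γ e^{−β/σ_{g_j}²} ∏_{i≠j} (1 − e^{−(1/σ_{f_i}²+1/σ_{g_i}²)β}) dβ. -/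
/-!
Put `M i = min (γf i) (γg i)`: it is exponential with rate `1/σ_{f_i}² + 1/σ_{g_i}²`, the `M i`
are independent, and `r` is almost surely their unique argmax. On the event that `j` is the
argmax, `γf j ≤ γ` holds iff `M j ≤ γ`, except on the event `γ < γf j, γg j ≤ γ, M i < γg j`
for `i ≠ j`. Summed over `j`, the events `M j ≤ γ, j argmax` give `P(max M ≤ γ)`, which is the
product term. The exceptional event involves the three independent blocks `γf j`, `γg j` and
`(M i)_{i ≠ j}`, so its probability is `P(γf j > γ)` times the integral of
`∏_{i ≠ j} P(M i < β)` against the density of `γg j`.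
-/

open MeasureTheory ProbabilityTheory Real Set
open scoped ENNReal

lemma one_sub_exp_neg_mul_nonneg {c x : ℝ} (hc : 0 ≤ c) (hx : 0 ≤ x) :
    0 ≤ 1 - exp (-(c * x)) :=
  sub_nonneg.2 (exp_le_one_iff.2 (neg_nonpos.2 (mul_nonneg hc hx)))

section ExponentialDistribution

variable {r : ℝ}

lemma expMeasure_eq_withDensity (r : ℝ) :
    expMeasure r = volume.withDensity (exponentialPDF r) := rfl

lemma expMeasure_Iic (hr : 0 < r) (x : ℝ) :
    expMeasure r (Iic x) = ENNReal.ofReal (1 - exp (-(r * x))) := by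
  have := isProbabilityMeasure_expMeasure hr
  rw [← ofReal_cdf, cdf_expMeasure_eq hr]
  split_ifs with hx
  · rfl
  · rw [ENNReal.ofReal_zero, eq_comm, ENNReal.ofReal_eq_zero, sub_nonpos, one_le_exp_iff]
    nlinarith

lemma expMeasure_Iio (hr : 0 < r) (x : ℝ) :
    expMeasure r (Iio x) = ENNReal.ofReal (1 - exp (-(r * x))) := by
  rw [expMeasure_eq_withDensity,
    measure_congr ((withDensity_absolutelyContinuous _ _).ae_eq Iio_ae_eq_Iic),
    ← expMeasure_eq_withDensity, expMeasure_Iic hr]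

lemma expMeasure_Ioi (hr : 0 < r) {x : ℝ} (hx : 0 ≤ x) :
    expMeasure r (Ioi x) = ENNReal.ofReal (exp (-(r * x))) := by
  have := isProbabilityMeasure_expMeasure hr
  rw [← compl_Iic, prob_compl_eq_one_sub measurableSet_Iic, expMeasure_Iic hr,
    ← ENNReal.ofReal_one, ← ENNReal.ofReal_sub _ (one_sub_exp_neg_mul_nonneg hr.le hx),
    sub_sub_cancel]

lemma toReal_setLIntegral_Iic_expMeasure (hr : 0 < r) {γ : ℝ} (hγ : 0 ≤ γ) {g : ℝ → ℝ≥0∞}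
    {f : ℝ → ℝ} (hf : Continuous f) (hf0 : ∀ y, 0 ≤ y → 0 ≤ f y)
    (hg : ∀ y, 0 ≤ y → g y = ENNReal.ofReal (f y)) :
    (∫⁻ y in Iic γ, g y ∂expMeasure r).toReal = r * ∫ y in 0..γ, exp (-(r * y)) * f y := by
  have hnull : Iic (0 : ℝ) =ᵐ[expMeasure r] (∅ : Set ℝ) := by
    rw [ae_eq_empty, expMeasure_Iic hr]
    simp
  have hset : Iic γ =ᵐ[expMeasure r] Ioc 0 γ := by
    rw [← Iic_union_Ioc_eq_Iic hγ]
    exact union_ae_eq_right_of_ae_eq_empty hnull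
  have hdens : ∀ y ∈ Ioc 0 γ,
      (exponentialPDF r * g) y = ENNReal.ofReal (r * exp (-(r * y)) * f y) := fun y hy => by
    rw [Pi.mul_apply, exponentialPDF_of_nonneg hy.1.le, hg y hy.1.le,
      ← ENNReal.ofReal_mul (by positivity)]
  have hmeas : Measurable (exponentialPDF r) := (measurable_exponentialPDFReal r).ennreal_ofReal
  rw [setLIntegral_congr hset, expMeasure_eq_withDensity,
    setLIntegral_withDensity_eq_setLIntegral_mul_non_measurable _ hmeas _ measurableSet_Ioc
      (ae_of_all _ fun _ => ENNReal.ofReal_lt_top),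
    setLIntegral_congr_fun measurableSet_Ioc hdens,
    ← integral_eq_lintegral_of_nonneg_ae _ (by fun_prop : Continuous _).aestronglyMeasurable,
    ← intervalIntegral.integral_of_le hγ, ← intervalIntegral.integral_const_mul]
  · simp_rw [mul_assoc]
  · exact ae_restrict_of_forall_mem measurableSet_Ioc fun y hy => by
      have := hf0 y hy.1.le
      positivity

end ExponentialDistribution

section StrictArgmax

variable {Ω ι : Type*} {M : ι → Ω → ℝ}

def strictArgmaxSet (M : ι → Ω → ℝ) (j : ι) : Set Ω := {ω | ∀ i, i ≠ j → M i ω < M j ω}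

lemma eq_of_mem_strictArgmaxSet {ω : Ω} {j k : ι} (hj : ω ∈ strictArgmaxSet M j)
    (hk : ω ∈ strictArgmaxSet M k) : j = k := by
  by_contra hjk
  exact lt_asymm (hj k (Ne.symm hjk)) (hk j hjk)

lemma forall_le_iff_of_mem_strictArgmaxSet {ω : Ω} {j : ι} (hj : ω ∈ strictArgmaxSet M j)
    {γ : ℝ} : (∀ i, M i ω ≤ γ) ↔ M j ω ≤ γ := by
  refine ⟨fun h => h j, fun h i => ?_⟩
  rcases eq_or_ne i j with rfl | hij
  · exact h
  · exact (hj i hij).le.trans h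

lemma setOf_le_inter_strictArgmaxSet_min (f g : ι → Ω → ℝ) (j : ι) (γ : ℝ) :
    {ω | f j ω ≤ γ} ∩ strictArgmaxSet (fun i ω => min (f i ω) (g i ω)) j
      = ({ω | min (f j ω) (g j ω) ≤ γ} ∩ strictArgmaxSet (fun i ω => min (f i ω) (g i ω)) j)
        \ {ω | γ < f j ω ∧ g j ω ≤ γ ∧ ∀ i, i ≠ j → min (f i ω) (g i ω) < g j ω} := by
  ext ω
  simp only [strictArgmaxSet, mem_inter_iff, mem_sdiff, mem_ofPred_eq, not_and, not_forall]
  constructor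
  · rintro ⟨hfj, hA⟩
    exact ⟨⟨(min_le_left _ _).trans hfj, hA⟩, fun hlt => absurd hfj hlt.not_ge⟩
  · rintro ⟨⟨hmin, hA⟩, hnD⟩
    refine ⟨not_lt.1 fun hlt => ?_, hA⟩
    have hgj : g j ω ≤ γ := (min_le_iff.1 hmin).resolve_left hlt.not_ge
    have hmin_eq : min (f j ω) (g j ω) = g j ω := min_eq_right (hgj.trans hlt.le)
    obtain ⟨i, hij, hi⟩ := hnD hlt hgj
    exact hi (hmin_eq ▸ hA i hij)

lemma setOf_lt_le_forall_min_lt_subset (f g : ι → Ω → ℝ) (j : ι) (γ : ℝ) :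
    {ω | γ < f j ω ∧ g j ω ≤ γ ∧ ∀ i, i ≠ j → min (f i ω) (g i ω) < g j ω}
      ⊆ {ω | min (f j ω) (g j ω) ≤ γ} ∩ strictArgmaxSet (fun i ω => min (f i ω) (g i ω)) j := by
  rintro ω ⟨hlt, hgj, hA⟩
  have hmin_eq : min (f j ω) (g j ω) = g j ω := min_eq_right (hgj.trans hlt.le)
  refine ⟨?_, fun i hij => (hA i hij).trans_eq hmin_eq.symm⟩
  rwa [mem_ofPred_eq, hmin_eq]

variable [MeasurableSpace Ω] {P : Measure Ω}

lemma measurableSet_strictArgmaxSet [Countable ι] (hM : ∀ i, Measurable (M i)) (j : ι) :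
    MeasurableSet (strictArgmaxSet M j) :=
  (Measurable.forall fun i => measurable_const.imp (measurableSet_lt (hM i) (hM j)).mem).setOf

lemma measureReal_eq_sum_inter_strictArgmaxSet [IsFiniteMeasure P] [Fintype ι]
    (hM : ∀ i, Measurable (M i)) {E : ι → Set Ω} (hE : ∀ j, MeasurableSet (E j)) {r : Ω → ι}
    (hr : ∀ᵐ ω ∂P, ω ∈ strictArgmaxSet M (r ω)) :
    P.real {ω | ω ∈ E (r ω)} = ∑ j, P.real (E j ∩ strictArgmaxSet M j) := by
  rw [← measureReal_iUnion_fintype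
    (fun j k hjk => disjoint_left.2 fun ω hj hk => hjk (eq_of_mem_strictArgmaxSet hj.2 hk.2))
    fun j => (hE j).inter (measurableSet_strictArgmaxSet hM j)]
  refine measureReal_congr (Filter.eventuallyEq_set.2 ?_)
  filter_upwards [hr] with ω hω
  refine ⟨fun h => mem_iUnion.2 ⟨r ω, h, hω⟩, fun h => ?_⟩
  obtain ⟨j, hj, hjmax⟩ := mem_iUnion.1 h
  rwa [eq_of_mem_strictArgmaxSet hω hjmax]

lemma measureReal_selected_le [IsFiniteMeasure P] [Fintype ι] {f g : ι → Ω → ℝ}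
    (hf : ∀ i, Measurable (f i)) (hg : ∀ i, Measurable (g i)) {r : Ω → ι}
    (hr : ∀ᵐ ω ∂P, ω ∈ strictArgmaxSet (fun i ω => min (f i ω) (g i ω)) (r ω)) (γ : ℝ) :
    P.real {ω | f (r ω) ω ≤ γ}
      = P.real {ω | ∀ i, min (f i ω) (g i ω) ≤ γ}
        - ∑ j, P.real {ω | γ < f j ω ∧ g j ω ≤ γ ∧ ∀ i, i ≠ j → min (f i ω) (g i ω) < g j ω} := by
  set M : ι → Ω → ℝ := fun i ω => min (f i ω) (g i ω)
  have hM : ∀ i, Measurable (M i) := fun i => (hf i).min (hg i)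
  have hle : ∀ {F : ι → Ω → ℝ}, (∀ j, Measurable (F j)) → ∀ j, MeasurableSet {ω | F j ω ≤ γ} :=
    fun hF j => measurableSet_le (hF j) measurable_const
  have hD : ∀ j, MeasurableSet {ω | γ < f j ω ∧ g j ω ≤ γ ∧ ∀ i, i ≠ j → M i ω < g j ω} :=
    fun j => (measurableSet_lt measurable_const (hf j)).inter ((hle hg j).inter
      (Measurable.forall fun i => measurable_const.imp (measurableSet_lt (hM i) (hg j)).mem).setOf)
  calc P.real {ω | f (r ω) ω ≤ γ}
      = ∑ j, P.real ({ω | f j ω ≤ γ} ∩ strictArgmaxSet M j) :=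
        measureReal_eq_sum_inter_strictArgmaxSet hM (hle hf) hr
    _ = ∑ j, (P.real ({ω | M j ω ≤ γ} ∩ strictArgmaxSet M j)
          - P.real {ω | γ < f j ω ∧ g j ω ≤ γ ∧ ∀ i, i ≠ j → M i ω < g j ω}) := by
        refine Finset.sum_congr rfl fun j _ => ?_
        rw [setOf_le_inter_strictArgmaxSet_min,
          measureReal_sdiff (setOf_lt_le_forall_min_lt_subset f g j γ) (hD j)]
    _ = P.real {ω | M (r ω) ω ≤ γ}
          - ∑ j, P.real {ω | γ < f j ω ∧ g j ω ≤ γ ∧ ∀ i, i ≠ j → M i ω < g j ω} := by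
        rw [Finset.sum_sub_distrib]
        exact congrArg (· - _) (measureReal_eq_sum_inter_strictArgmaxSet hM (hle hM) hr).symm
    _ = _ := by
        refine congrArg (· - _) (measureReal_congr (Filter.eventuallyEq_set.2 ?_))
        filter_upwards [hr] with ω hω
        exact (forall_le_iff_of_mem_strictArgmaxSet hω).symm

end StrictArgmax

namespace ProbabilityTheory

variable {Ω : Type*} [MeasurableSpace Ω] {P : Measure Ω}

section Independence

lemma iIndepFun.indepFun_finset_of_notMem {ι : Type*} {β : ι → Type*}
    [∀ i, MeasurableSpace (β i)] {f : ∀ i, Ω → β i} (h : iIndepFun f P)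
    (hf : ∀ i, Measurable (f i)) {s : Finset ι} {j : ι} (hj : j ∉ s) :
    IndepFun (f j) (fun ω (i : s) => f i ω) P := by
  classical
  exact (h.indepFun_finset {j} s (Finset.disjoint_singleton_left.2 hj) hf).comp
    (measurable_pi_apply ⟨j, Finset.mem_singleton_self j⟩) measurable_id

lemma IndepFun.indepFun_prodMk_of_prodMk [IsFiniteMeasure P] {α β γ : Type*}
    [MeasurableSpace α] [MeasurableSpace β] [MeasurableSpace γ] {X : Ω → α} {Y : Ω → β}
    {Z : Ω → γ} (hX : Measurable X) (hY : Measurable Y) (hZ : Measurable Z)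
    (hXY : IndepFun X Y P) (hXYZ : IndepFun (fun ω => (X ω, Y ω)) Z P) :
    IndepFun X (fun ω => (Y ω, Z ω)) P := by
  have hYZ : IndepFun Y Z P := hXYZ.comp measurable_snd measurable_id
  rw [indepFun_iff_map_prod_eq_prod_map_map hX.aemeasurable (hY.prodMk hZ).aemeasurable,
    (indepFun_iff_map_prod_eq_prod_map_map hY.aemeasurable hZ.aemeasurable).1 hYZ,
    ← Measure.prodAssoc_prod,
    ← (indepFun_iff_map_prod_eq_prod_map_map hX.aemeasurable hY.aemeasurable).1 hXY,
    ← (indepFun_iff_map_prod_eq_prod_map_map (hX.prodMk hY).aemeasurable hZ.aemeasurable).1 hXYZ,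
    Measure.map_map MeasurableEquiv.prodAssoc.measurable ((hX.prodMk hY).prodMk hZ)]
  rfl

lemma iIndepFun.prodMk_of_sumElim [IsProbabilityMeasure P] {ι β : Type*} [Fintype ι]
    [MeasurableSpace β] {f g : ι → Ω → β} (hf : ∀ i, Measurable (f i))
    (hg : ∀ i, Measurable (g i)) (h : iIndepFun (Sum.elim f g) P) :
    iIndepFun (fun i ω => (f i ω, g i ω)) P := by
  have hfg : ∀ k, Measurable (Sum.elim f g k) := Sum.forall.2 ⟨hf, hg⟩
  rw [iIndepFun_iff_map_fun_eq_pi_map fun i => ((hf i).prodMk (hg i)).aemeasurable]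
  have e : (fun ω i => (f i ω, g i ω)) = (MeasurableEquiv.arrowProdEquivProdArrow β β ι).symm ∘
      MeasurableEquiv.sumPiEquivProdPi (fun _ => β) ∘ (fun ω k => Sum.elim f g k ω) := rfl
  rw [e, ← Measure.map_map (by fun_prop) (by fun_prop),
    ← Measure.map_map (by fun_prop) (measurable_pi_lambda _ hfg),
    h.map_fun_eq_pi_map fun k => (hfg k).aemeasurable,
    (measurePreserving_sumPiEquivProdPi _).map_eq,
    ((measurePreserving_arrowProdEquivProdArrow β β ι _ _).symm _).map_eq]
  congr 1
  funext i
  exact ((indepFun_iff_map_prod_eq_prod_map_map (hf i).aemeasurable (hg i).aemeasurable).1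
    (h.indepFun Sum.inl_ne_inr)).symm

lemma IndepFun.measure_prodMk_preimage [IsFiniteMeasure P] {α β : Type*} [MeasurableSpace α]
    [MeasurableSpace β] {X : Ω → α} {Y : Ω → β} (hX : Measurable X) (hY : Measurable Y)
    (hXY : IndepFun X Y P) {s : Set (α × β)} (hs : MeasurableSet s) :
    P ((fun ω => (X ω, Y ω)) ⁻¹' s) = ∫⁻ x, P.map Y (Prod.mk x ⁻¹' s) ∂P.map X := by
  rw [← Measure.map_apply (hX.prodMk hY) hs,
    (indepFun_iff_map_prod_eq_prod_map_map hX.aemeasurable hY.aemeasurable).1 hXY,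
    Measure.prod_apply hs]

end Independence

section ExponentialLaws

variable {κ : Type*} [Fintype κ] {Z : κ → Ω → ℝ} {c : κ → ℝ} {γ : ℝ}

lemma hasLaw_expMeasure_of_cdf [IsProbabilityMeasure P] {r : ℝ} {X : Ω → ℝ}
    (hX : Measurable X) (hr : 0 < r)
    (hcdf : ∀ x, 0 ≤ x → P.real {ω | X ω ≤ x} = 1 - exp (-(r * x))) :
    HasLaw X (expMeasure r) P := by
  refine ⟨hX.aemeasurable, ?_⟩
  have := isProbabilityMeasure_expMeasure hr
  have := Measure.isProbabilityMeasure_map (μ := P) hX.aemeasurable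
  refine Measure.eq_of_cdf _ _ (StieltjesFunction.ext fun x => ?_)
  rw [cdf_eq_real, cdf_expMeasure_eq hr, map_measureReal_apply hX measurableSet_Iic]
  split_ifs with hx
  · exact hcdf x hx
  · have h0 : P.real {ω | X ω ≤ 0} = 0 := by simpa using hcdf 0 le_rfl
    refine le_antisymm (h0 ▸ measureReal_mono fun ω (hω : X ω ≤ x) => ?_) measureReal_nonneg
    exact hω.trans (not_le.1 hx).le

lemma IndepFun.hasLaw_min_expMeasure [IsProbabilityMeasure P] {X Y : Ω → ℝ} {a b : ℝ}
    (ha : 0 < a) (hb : 0 < b) (hXm : Measurable X) (hYm : Measurable Y) (hXY : IndepFun X Y P)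
    (hX : HasLaw X (expMeasure a) P) (hY : HasLaw Y (expMeasure b) P) :
    HasLaw (fun ω => min (X ω) (Y ω)) (expMeasure (a + b)) P := by
  refine hasLaw_expMeasure_of_cdf (hXm.min hYm) (add_pos ha hb) fun x hx => ?_
  have hsurv : ∀ {W : Ω → ℝ} {r : ℝ}, Measurable W → 0 < r → HasLaw W (expMeasure r) P →
      (P (W ⁻¹' Ioi x)).toReal = exp (-(r * x)) := fun hWm hr hW => by
    rw [← Measure.map_apply hWm measurableSet_Ioi, hW.map_eq, expMeasure_Ioi hr hx,
      ENNReal.toReal_ofReal (exp_pos _).le]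
  have hcompl : {ω | min (X ω) (Y ω) ≤ x} = (X ⁻¹' Ioi x ∩ Y ⁻¹' Ioi x)ᶜ := by
    ext ω
    simp only [mem_ofPred_eq, mem_compl_iff, mem_inter_iff, mem_preimage, mem_Ioi, not_and_or,
      not_lt, min_le_iff]
  rw [hcompl, probReal_compl_eq_one_sub ((hXm measurableSet_Ioi).inter (hYm measurableSet_Ioi)),
    measureReal_def, hXY.measure_inter_preimage_eq_mul _ _ measurableSet_Ioi measurableSet_Ioi,
    ENNReal.toReal_mul, hsurv hXm ha hX, hsurv hYm hb hY, ← exp_add]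
  ring_nf

lemma iIndepFun.measureReal_forall_le (hc : ∀ k, 0 < c k) (hZm : ∀ k, Measurable (Z k))
    (hZ : ∀ k, HasLaw (Z k) (expMeasure (c k)) P) (hind : iIndepFun Z P) (hγ : 0 ≤ γ) :
    P.real {ω | ∀ k, Z k ω ≤ γ} = ∏ k, (1 - exp (-(c k * γ))) := by
  have hset : {ω | ∀ k, Z k ω ≤ γ} = ⋂ k, Z k ⁻¹' Iic γ := by
    ext
    simp
  rw [hset, measureReal_def, hind.meas_iInter fun k => ⟨Iic γ, measurableSet_Iic, rfl⟩,
    ENNReal.toReal_prod]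
  refine Finset.prod_congr rfl fun k _ => ?_
  rw [← Measure.map_apply (hZm k) measurableSet_Iic, (hZ k).map_eq, expMeasure_Iic (hc k),
    ENNReal.toReal_ofReal (one_sub_exp_neg_mul_nonneg (hc k).le hγ)]

lemma measureReal_lt_le_forall_lt [IsFiniteMeasure P] {X Y : Ω → ℝ} {a b : ℝ} (ha : 0 < a)
    (hb : 0 < b) (hc : ∀ k, 0 < c k) (hXm : Measurable X) (hYm : Measurable Y)
    (hZm : ∀ k, Measurable (Z k)) (hX : HasLaw X (expMeasure a) P)
    (hY : HasLaw Y (expMeasure b) P) (hZ : ∀ k, HasLaw (Z k) (expMeasure (c k)) P)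
    (hXY : IndepFun X Y P) (hXYZ : IndepFun (fun ω => (X ω, Y ω)) (fun ω k => Z k ω) P)
    (hind : iIndepFun Z P) (hγ : 0 ≤ γ) :
    P.real {ω | γ < X ω ∧ Y ω ≤ γ ∧ ∀ k, Z k ω < Y ω}
      = b * exp (-(a * γ)) * ∫ β in 0..γ, exp (-(b * β)) * ∏ k, (1 - exp (-(c k * β))) := by
  have hZv : Measurable fun ω k => Z k ω := measurable_pi_lambda _ hZm
  have (k : κ) : IsProbabilityMeasure (expMeasure (c k)) := isProbabilityMeasure_expMeasure (hc k)
  let T : Set (ℝ × (κ → ℝ)) := {p | p.1 ≤ γ} ∩ ⋂ k, {p | p.2 k < p.1}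
  have hT : MeasurableSet T := (measurableSet_le measurable_fst measurable_const).inter <|
    .iInter fun k => measurableSet_lt ((measurable_pi_apply k).comp measurable_snd) measurable_fst
  have hslice : ∀ y, (Measure.pi fun k => expMeasure (c k)) (Prod.mk y ⁻¹' T)
      = (Iic γ).indicator (fun y => ∏ k, ENNReal.ofReal (1 - exp (-(c k * y)))) y := by
    intro y
    by_cases hy : y ≤ γ
    · have : Prod.mk y ⁻¹' T = univ.pi fun _ => Iio y := by ext v; simp [T, hy]
      rw [indicator_of_mem (mem_Iic.2 hy), this, Measure.pi_pi]
      exact Finset.prod_congr rfl fun k _ => expMeasure_Iio (hc k) y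
    · have : Prod.mk y ⁻¹' T = ∅ := by ext v; simp [T, hy]
      rw [indicator_of_notMem (mt mem_Iic.1 hy), this, measure_empty]
  have hYZ : P.real ((fun ω => (Y ω, fun k => Z k ω)) ⁻¹' T)
      = b * ∫ β in 0..γ, exp (-(b * β)) * ∏ k, (1 - exp (-(c k * β))) := by
    rw [measureReal_def,
      (hXYZ.comp measurable_snd measurable_id).measure_prodMk_preimage hYm hZv hT,
      (hind.hasLaw_pi hZ).map_eq, hY.map_eq, lintegral_congr hslice,
      lintegral_indicator measurableSet_Iic]
    refine toReal_setLIntegral_Iic_expMeasure hb hγ (by fun_prop)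
      (fun y hy => Finset.prod_nonneg fun k _ => one_sub_exp_neg_mul_nonneg (hc k).le hy)
      fun y hy => ?_
    exact (ENNReal.ofReal_prod_of_nonneg fun k _ =>
      one_sub_exp_neg_mul_nonneg (hc k).le hy).symm
  have hX_YZ : IndepFun X (fun ω => (Y ω, fun k => Z k ω)) P :=
    hXY.indepFun_prodMk_of_prodMk hXm hYm hZv hXYZ
  have hset : {ω | γ < X ω ∧ Y ω ≤ γ ∧ ∀ k, Z k ω < Y ω}
      = X ⁻¹' Ioi γ ∩ (fun ω => (Y ω, fun k => Z k ω)) ⁻¹' T := by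
    ext
    simp [T]
  rw [hset, measureReal_def, hX_YZ.measure_inter_preimage_eq_mul _ _ measurableSet_Ioi hT,
    ENNReal.toReal_mul, ← Measure.map_apply hXm measurableSet_Ioi, hX.map_eq,
    expMeasure_Ioi ha hγ, ENNReal.toReal_ofReal (exp_pos _).le, ← measureReal_def, hYZ]
  ring

variable [IsProbabilityMeasure P] {ι : Type*} [Fintype ι] {f g : ι → Ω → ℝ} {a b : ι → ℝ}

lemma iIndepFun.measureReal_forall_min_le (ha : ∀ i, 0 < a i) (hb : ∀ i, 0 < b i)
    (hf : ∀ i, Measurable (f i)) (hg : ∀ i, Measurable (g i))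
    (hlawf : ∀ i, HasLaw (f i) (expMeasure (a i)) P)
    (hlawg : ∀ i, HasLaw (g i) (expMeasure (b i)) P) (hind : iIndepFun (Sum.elim f g) P)
    (hγ : 0 ≤ γ) :
    P.real {ω | ∀ i, min (f i ω) (g i ω) ≤ γ} = ∏ i, (1 - exp (-((a i + b i) * γ))) :=
  ((hind.prodMk_of_sumElim hf hg).comp _ fun _ => measurable_fst.min measurable_snd)
    |>.measureReal_forall_le (fun i => add_pos (ha i) (hb i)) (fun i => (hf i).min (hg i))
      (fun i => (hind.indepFun Sum.inl_ne_inr).hasLaw_min_expMeasure (ha i) (hb i) (hf i) (hg i)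
        (hlawf i) (hlawg i)) hγ

lemma iIndepFun.measureReal_lt_le_forall_min_lt [DecidableEq ι] (ha : ∀ i, 0 < a i)
    (hb : ∀ i, 0 < b i) (hf : ∀ i, Measurable (f i)) (hg : ∀ i, Measurable (g i))
    (hlawf : ∀ i, HasLaw (f i) (expMeasure (a i)) P)
    (hlawg : ∀ i, HasLaw (g i) (expMeasure (b i)) P) (hind : iIndepFun (Sum.elim f g) P)
    (j : ι) (hγ : 0 ≤ γ) :
    P.real {ω | γ < f j ω ∧ g j ω ≤ γ ∧ ∀ i, i ≠ j → min (f i ω) (g i ω) < g j ω}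
      = b j * exp (-(a j * γ)) * ∫ β in 0..γ, exp (-(b j * β)) *
          ∏ i ∈ Finset.univ.erase j, (1 - exp (-((a i + b i) * β))) := by
  have hW := hind.prodMk_of_sumElim hf hg
  have hrest : IndepFun (fun ω => (f j ω, g j ω))
      (fun ω (k : {i // i ∈ Finset.univ.erase j}) => min (f k ω) (g k ω)) P := by
    have hmin : Measurable fun (v : {i // i ∈ Finset.univ.erase j} → ℝ × ℝ) k =>
        min (v k).1 (v k).2 := by fun_prop
    exact (hW.indepFun_finset_of_notMem (fun i => (hf i).prodMk (hg i))
      (Finset.notMem_erase j _)).comp measurable_id hmin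
  have h := measureReal_lt_le_forall_lt
    (Z := fun (k : {i // i ∈ Finset.univ.erase j}) ω => min (f k ω) (g k ω))
    (c := fun k => a k + b k) (ha j) (hb j)
    (fun k => add_pos (ha k) (hb k)) (hf j) (hg j) (fun k => (hf k).min (hg k)) (hlawf j)
    (hlawg j) (fun k => (hind.indepFun Sum.inl_ne_inr).hasLaw_min_expMeasure (ha k) (hb k)
      (hf k) (hg k) (hlawf k) (hlawg k)) (hind.indepFun Sum.inl_ne_inr) hrest
    ((hW.comp _ fun _ => measurable_fst.min measurable_snd).precomp Subtype.val_injective) hγ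
  simp only [Subtype.forall, Finset.mem_erase, Finset.mem_univ, and_true] at h
  rw [h]
  simp_rw [Finset.prod_subtype (Finset.univ.erase j) (fun _ => Iff.rfl)]

end ExponentialLaws

end ProbabilityTheory

theorem cdf_selected_relay_gain_general
    {Ω : Type*} [MeasurableSpace Ω] (P : Measure Ω) [IsProbabilityMeasure P]
    (N : ℕ) (γf γg : Fin N → Ω → ℝ)
    (hf : ∀ i, Measurable (γf i)) (hg : ∀ i, Measurable (γg i))
    (sf sg : Fin N → ℝ) (hsf : ∀ i, 0 < sf i) (hsg : ∀ i, 0 < sg i)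
    (hind : iIndepFun (Sum.elim γf γg) P)
    (hfe : ∀ i, ∀ x : ℝ, 0 ≤ x → (P {ω | γf i ω ≤ x}).toReal = 1 - Real.exp (-(x / sf i)))
    (hge : ∀ i, ∀ x : ℝ, 0 ≤ x → (P {ω | γg i ω ≤ x}).toReal = 1 - Real.exp (-(x / sg i)))
    (r : Ω → Fin N)
    (hmax : ∀ᵐ ω ∂P, ∀ i, i ≠ r ω →
      min (γf i ω) (γg i ω) < min (γf (r ω) ω) (γg (r ω) ω)) :
    ∀ γ : ℝ, 0 ≤ γ →
      (P {ω | γf (r ω) ω ≤ γ}).toReal =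
        (∏ i, (1 - Real.exp (-((1 / sf i + 1 / sg i) * γ))))
        - ∑ j, (1 / sg j) * Real.exp (-(γ / sf j)) *
            ∫ β in (0:ℝ)..γ, Real.exp (-(β / sg j)) *
              ∏ i ∈ Finset.univ.erase j, (1 - Real.exp (-((1 / sf i + 1 / sg i) * β))) := by
  intro γ hγ
  have ha : ∀ i, 0 < 1 / sf i := fun i => one_div_pos.2 (hsf i)
  have hb : ∀ i, 0 < 1 / sg i := fun i => one_div_pos.2 (hsg i)
  have hlawf : ∀ i, HasLaw (γf i) (expMeasure (1 / sf i)) P := fun i =>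
    hasLaw_expMeasure_of_cdf (hf i) (ha i) fun x hx => by
      rw [one_div_mul_eq_div]
      exact hfe i x hx
  have hlawg : ∀ i, HasLaw (γg i) (expMeasure (1 / sg i)) P := fun i =>
    hasLaw_expMeasure_of_cdf (hg i) (hb i) fun x hx => by
      rw [one_div_mul_eq_div]
      exact hge i x hx
  rw [← measureReal_def, measureReal_selected_le hf hg hmax,
    hind.measureReal_forall_min_le ha hb hf hg hlawf hlawg hγ]
  refine congrArg _ (Finset.sum_congr rfl fun j _ => ?_)
  rw [hind.measureReal_lt_le_forall_min_lt ha hb hf hg hlawf hlawg j hγ]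
  simp only [one_div_mul_eq_div]

/-- Proposition 1: CDF of the source-to-selected-relay gain `γ_{f_r}`. -/
theorem cdf_selected_relay_gain
    {Ω : Type*} [MeasurableSpace Ω] (P : Measure Ω) [IsProbabilityMeasure P]
    (N : ℕ) (hN : 1 ≤ N) (γf γg : Fin N → Ω → ℝ)
    (hf : ∀ i, Measurable (γf i)) (hg : ∀ i, Measurable (γg i))
    (sf sg : Fin N → ℝ) (hsf : ∀ i, 0 < sf i) (hsg : ∀ i, 0 < sg i)
    (hind : iIndepFun (Sum.elim γf γg) P)
    (hfpos : ∀ i ω, 0 ≤ γf i ω) (hgpos : ∀ i ω, 0 ≤ γg i ω)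
    (hfe : ∀ i, ∀ x : ℝ, 0 ≤ x → (P {ω | γf i ω ≤ x}).toReal = 1 - Real.exp (-(x / sf i)))
    (hge : ∀ i, ∀ x : ℝ, 0 ≤ x → (P {ω | γg i ω ≤ x}).toReal = 1 - Real.exp (-(x / sg i)))
    (r : Ω → Fin N) (hr : Measurable r)
    (hmax : ∀ᵐ ω ∂P, ∀ i, i ≠ r ω →
      min (γf i ω) (γg i ω) < min (γf (r ω) ω) (γg (r ω) ω)) :
    ∀ γ : ℝ, 0 ≤ γ →
      (P {ω | γf (r ω) ω ≤ γ}).toReal =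
        (∏ i, (1 - Real.exp (-((1 / sf i + 1 / sg i) * γ))))
        - ∑ j, (1 / sg j) * Real.exp (-(γ / sf j)) *
            ∫ β in (0:ℝ)..γ, Real.exp (-(β / sg j)) *
              ∏ i ∈ Finset.univ.erase j, (1 - Real.exp (-((1 / sf i + 1 / sg i) * β))) :=
  cdf_selected_relay_gain_general P N γf γg hf hg sf sg hsf hsg hind hfe hge r hmax
end

section
/- In the i.i.d. case σ_{f_i}² = σ_f², σ_{g_i}² = σ_g² for all i, the CDF of γ_{f_r} equals F(γ) = (1 − e^{−(1/σ_f²+1/σ_g²)γ})^N − (N σ_f²/(σ_f²+σ_g²)) e^{−γ/σ_f²} · B(1 − e^{−(1/σ_f²+1/σ_g²)γ}; N, σ_f²/(σ_f²+σ_g²)), where B(x;a,b) = ∫_0^x t^{a−1}(1−t)^{b−1} dt is the incomplete beta function. -/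
/-!
Substitute `t = 1 - exp (-c β)` with `c = 1/σ_f + 1/σ_g`: then `dt = c exp (-c β) dβ` and
`(1 - t) ^ (b - 1) = exp (-c (b - 1) β)`, so the weight becomes `c exp (-b c β)`, and for
`b = σ_f / (σ_f + σ_g)` one has `b c = 1/σ_g`.
-/

open Real

theorem hasDerivAt_one_sub_exp_neg_mul (c x : ℝ) :
    HasDerivAt (fun x => 1 - exp (-(c * x))) (c * exp (-(c * x))) x := by
  simpa [mul_comm] using (((hasDerivAt_id x).const_mul c).neg.exp).const_sub 1

theorem exp_neg_mul_mul_rpow_sub_one (b c x : ℝ) :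
    exp (-(c * x)) ^ (b - 1) * exp (-(c * x)) = exp (-(b * c * x)) := by
  rw [← exp_mul, ← exp_add]
  ring_nf

theorem integral_mul_one_sub_rpow_eq_integral_exp_neg (g : ℝ → ℝ) (hg : Continuous g)
    (b c γ : ℝ) :
    ∫ t in (0:ℝ)..(1 - exp (-(c * γ))), g t * (1 - t) ^ (b - 1)
      = c * ∫ x in (0:ℝ)..γ, exp (-(b * c * x)) * g (1 - exp (-(c * x))) := by
  have hweight : ContinuousOn (fun t : ℝ => g t * (1 - t) ^ (b - 1))
      ((fun x => 1 - exp (-(c * x))) '' Set.uIcc 0 γ) := by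
    refine hg.continuousOn.mul (ContinuousOn.rpow_const (by fun_prop) ?_)
    rintro _ ⟨x, -, rfl⟩
    exact Or.inl (by simp [(exp_pos _).ne'])
  have hsub := intervalIntegral.integral_comp_mul_deriv'
    (fun x _ => hasDerivAt_one_sub_exp_neg_mul c x) (by fun_prop) hweight
  simp only [Function.comp_def, sub_sub_cancel, neg_zero, mul_zero, exp_zero, sub_self] at hsub
  rw [← hsub, ← intervalIntegral.integral_const_mul]
  congr 1 with x
  rw [← exp_neg_mul_mul_rpow_sub_one b c x]
  ring

theorem cdf_selected_relay_iid_incomplete_beta_general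
    (N : ℕ) (sf sg : ℝ) (hsf : 0 < sf) (hsg : 0 < sg) :
    ∀ γ : ℝ, 0 ≤ γ →
      (1 - Real.exp (-((1/sf + 1/sg) * γ)))^N
        - (N : ℝ) * (1/sg) * Real.exp (-(γ/sf)) *
            ∫ β in (0:ℝ)..γ, Real.exp (-(β/sg)) *
              (1 - Real.exp (-((1/sf + 1/sg) * β)))^(N-1)
      = (1 - Real.exp (-((1/sf + 1/sg) * γ)))^N
        - ((N : ℝ) * sf / (sf + sg)) * Real.exp (-(γ/sf)) *
            ∫ t in (0:ℝ)..(1 - Real.exp (-((1/sf + 1/sg) * γ))),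
              t^(N-1) * (1 - t) ^ (sf/(sf + sg) - 1 : ℝ) := by
  intro γ _
  have hrate : sf / (sf + sg) * (1/sf + 1/sg) = 1/sg := by
    field_simp
    ring
  rw [integral_mul_one_sub_rpow_eq_integral_exp_neg (· ^ (N - 1)) (continuous_pow _), hrate]
  simp only [one_div_mul_eq_div]
  linear_combination (N * exp (-(γ / sf)) *
    ∫ x in (0:ℝ)..γ, exp (-(x / sg)) * (1 - exp (-((1/sf + 1/sg) * x))) ^ (N - 1)) * hrate

/-- Corollary 1: in the i.i.d. case, the Proposition-1 CDF of `γ_{f_r}` equals the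
incomplete-beta-function expression. -/
theorem cdf_selected_relay_iid_incomplete_beta
    (N : ℕ) (hN : 1 ≤ N) (sf sg : ℝ) (hsf : 0 < sf) (hsg : 0 < sg) :
    ∀ γ : ℝ, 0 ≤ γ →
      (1 - Real.exp (-((1/sf + 1/sg) * γ)))^N
        - (N : ℝ) * (1/sg) * Real.exp (-(γ/sf)) *
            ∫ β in (0:ℝ)..γ, Real.exp (-(β/sg)) *
              (1 - Real.exp (-((1/sf + 1/sg) * β)))^(N-1)
      = (1 - Real.exp (-((1/sf + 1/sg) * γ)))^N
        - ((N : ℝ) * sf / (sf + sg)) * Real.exp (-(γ/sf)) *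
            ∫ t in (0:ℝ)..(1 - Real.exp (-((1/sf + 1/sg) * γ))),
              t^(N-1) * (1 - t) ^ (sf/(sf + sg) - 1 : ℝ) :=
  cdf_selected_relay_iid_incomplete_beta_general N sf sg hsf hsg
end

section
/- For the CDF F of γ_{f_r} from Proposition 1, as γ → 0⁺ we have F(γ) = γ^N · (∏_{i=1}^N (1/σ_{f_i}² + 1/σ_{g_i}²)) · ((1/N) Σ_{i=1}^N σ_{g_i}²/(σ_{f_i}²+σ_{g_i}²)) + o(γ^N). In particular F(γ)/γ^N converges to that constant as γ → 0⁺. -/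
/-!
Each factor `1 - exp (-(a γ))` is `a γ + o(γ)`, so the leading product is `γ^N ∏ aᵢ + o(γ^N)`.
In the `j`-th correction term the integrand is `β^(N-1) ∏_{i ≠ j} aᵢ + o(β^(N-1))`, so by
L'Hôpital the integral is `γ^N / N · ∏_{i ≠ j} aᵢ + o(γ^N)`. Since `1/σ_{g_j} = a_j σ_{f_j}/(σ_{f_j}+σ_{g_j})`
with `a_j = 1/σ_{f_j} + 1/σ_{g_j}`, the constants combine to `∏ aᵢ · (1 - (1/N) ∑ σ_{f_i}/(σ_{f_i}+σ_{g_i}))`.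
-/

open Real Filter Topology Finset

theorem tendsto_one_sub_exp_neg_mul_div (a : ℝ) :
    Tendsto (fun γ : ℝ => (1 - exp (-(a * γ))) / γ) (𝓝[>] 0) (𝓝 a) := by
  have hderiv : HasDerivAt (fun γ : ℝ => 1 - exp (-(a * γ))) a 0 := by
    simpa using (((hasDerivAt_id (0 : ℝ)).const_mul a).neg.exp).const_sub 1
  refine hderiv.tendsto_slope_zero_right.congr fun γ => ?_
  simp [div_eq_inv_mul]

theorem tendsto_prod_div_pow_card {ι : Type*} {l : Filter ℝ} (s : Finset ι) (f : ι → ℝ → ℝ)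
    (a : ι → ℝ) (hf : ∀ i ∈ s, Tendsto (fun γ => f i γ / γ) l (𝓝 (a i))) :
    Tendsto (fun γ => (∏ i ∈ s, f i γ) / γ ^ #s) l (𝓝 (∏ i ∈ s, a i)) := by
  refine (tendsto_finsetProd s hf).congr fun γ => ?_
  rw [prod_div_distrib, prod_const]

theorem tendsto_prod_one_sub_exp_neg_mul_div_pow {ι : Type*} (s : Finset ι) (a : ι → ℝ) :
    Tendsto (fun γ : ℝ => (∏ i ∈ s, (1 - exp (-(a i * γ)))) / γ ^ #s) (𝓝[>] 0)
      (𝓝 (∏ i ∈ s, a i)) :=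
  tendsto_prod_div_pow_card s _ a fun i _ => tendsto_one_sub_exp_neg_mul_div (a i)

theorem tendsto_integral_div_pow_succ {h : ℝ → ℝ} (hh : Continuous h) (n : ℕ) {c : ℝ}
    (hlim : Tendsto (fun γ => h γ / γ ^ n) (𝓝[>] 0) (𝓝 c)) :
    Tendsto (fun γ => (∫ β in (0 : ℝ)..γ, h β) / γ ^ (n + 1)) (𝓝[>] 0) (𝓝 (c / (n + 1))) := by
  have hF : ∀ x : ℝ, HasDerivAt (fun γ => ∫ β in (0 : ℝ)..γ, h β) (h x) x := fun x =>
    hh.integral_hasStrictDerivAt 0 x |>.hasDerivAt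
  have hpow : ∀ x : ℝ, HasDerivAt (fun γ : ℝ => γ ^ (n + 1)) ((n + 1) * x ^ n) x := fun x => by
    simpa using hasDerivAt_pow (n + 1) x
  refine HasDerivAt.lhopital_zero_nhdsGT (Eventually.of_forall hF) (Eventually.of_forall hpow)
    ?_ ?_ ?_ ?_
  · filter_upwards [self_mem_nhdsWithin] with x (hx : 0 < x)
    positivity
  · simpa using ((hF 0).continuousAt.tendsto).mono_left nhdsWithin_le_nhds
  · simpa using ((continuous_pow (n + 1)).tendsto (0 : ℝ)).mono_left nhdsWithin_le_nhds
  · refine (hlim.div_const (n + 1)).congr fun x => ?_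
    rw [div_div, mul_comm]

theorem tendsto_exp_neg_div_nhdsGT_zero (b : ℝ) :
    Tendsto (fun γ : ℝ => exp (-(γ / b))) (𝓝[>] 0) (𝓝 1) :=
  ((continuous_exp.comp (continuous_id.div_const b).neg).tendsto' 0 1 (by simp)).mono_left
    nhdsWithin_le_nhds

theorem tendsto_integral_exp_neg_div_mul_prod_div_pow {ι : Type*} (b : ℝ) (s : Finset ι)
    (a : ι → ℝ) :
    Tendsto (fun γ : ℝ => (∫ β in (0 : ℝ)..γ, exp (-(β / b)) *
        ∏ i ∈ s, (1 - exp (-(a i * β)))) / γ ^ (#s + 1)) (𝓝[>] 0)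
      (𝓝 ((∏ i ∈ s, a i) / (#s + 1))) := by
  refine tendsto_integral_div_pow_succ (by fun_prop) _ ?_
  simpa only [one_mul, mul_div_assoc] using
    (tendsto_exp_neg_div_nhdsGT_zero b).mul (tendsto_prod_one_sub_exp_neg_mul_div_pow s a)

theorem one_div_eq_add_one_div_mul_div_add {x y : ℝ} (hx : 0 < x) (hy : 0 < y) :
    1 / y = (1 / x + 1 / y) * (x / (x + y)) := by
  field_simp
  ring

theorem sum_mul_mul_prod_erase {ι R : Type*} [CommSemiring R] [DecidableEq ι] (s : Finset ι)
    (a w : ι → R) :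
    ∑ j ∈ s, a j * w j * ∏ i ∈ s.erase j, a i = (∏ i ∈ s, a i) * ∑ j ∈ s, w j := by
  rw [mul_sum]
  refine sum_congr rfl fun j hj => ?_
  rw [← mul_prod_erase s a hj]
  ring

theorem prod_sub_sum_div_card_eq {ι : Type*} [Fintype ι] [DecidableEq ι] [Nonempty ι]
    (sf sg : ι → ℝ) (hsf : ∀ i, 0 < sf i) (hsg : ∀ i, 0 < sg i) :
    (∏ i, (1 / sf i + 1 / sg i)) -
        ∑ j, 1 / sg j * ((∏ i ∈ univ.erase j, (1 / sf i + 1 / sg i)) / Fintype.card ι) =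
      (∏ i, (1 / sf i + 1 / sg i)) * (1 / Fintype.card ι * ∑ i, sg i / (sf i + sg i)) := by
  have hcorr : ∑ j, 1 / sg j * ∏ i ∈ univ.erase j, (1 / sf i + 1 / sg i) =
      (∏ i, (1 / sf i + 1 / sg i)) * ∑ j, sf j / (sf j + sg j) := by
    rw [← sum_mul_mul_prod_erase]
    refine sum_congr rfl fun j _ => ?_
    rw [← one_div_eq_add_one_div_mul_div_add (hsf j) (hsg j)]
  have hsplit : ∑ j, sf j / (sf j + sg j) + ∑ j, sg j / (sf j + sg j) = Fintype.card ι := by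
    have hone : ∀ j, sf j / (sf j + sg j) + sg j / (sf j + sg j) = 1 := fun j => by
      rw [← add_div, div_self (add_pos (hsf j) (hsg j)).ne']
    simp [← sum_add_distrib, hone]
  have hcard : (Fintype.card ι : ℝ) ≠ 0 := by positivity
  simp_rw [mul_div_assoc', ← sum_div, hcorr]
  field_simp
  linear_combination -(∏ i, (1 / sf i + 1 / sg i)) * hsplit

/-- Corollary 2: small-argument (high-SNR) behavior of the Proposition-1 CDF:
`F(γ)/γ^N → (∏ (1/σf_i² + 1/σg_i²)) · ((1/N) ∑ σg_i²/(σf_i²+σg_i²))` as `γ → 0⁺`. -/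
theorem cdf_selected_relay_small_gamma
    (N : ℕ) (hN : 1 ≤ N) (sf sg : Fin N → ℝ)
    (hsf : ∀ i, 0 < sf i) (hsg : ∀ i, 0 < sg i) :
    Filter.Tendsto
      (fun γ : ℝ =>
        ((∏ i, (1 - Real.exp (-((1/sf i + 1/sg i) * γ))))
          - ∑ j, (1/sg j) * Real.exp (-(γ/sf j)) *
              ∫ β in (0:ℝ)..γ, Real.exp (-(β/sg j)) *
                ∏ i ∈ Finset.univ.erase j,
                  (1 - Real.exp (-((1/sf i + 1/sg i) * β)))) / γ^N)
      (nhdsWithin 0 (Set.Ioi 0))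
      (nhds ((∏ i, (1/sf i + 1/sg i)) * ((1/(N:ℝ)) * ∑ i, sg i / (sf i + sg i)))) := by
  obtain ⟨n, rfl⟩ : ∃ n, N = n + 1 := ⟨N - 1, by omega⟩
  set a : Fin (n + 1) → ℝ := fun i => 1 / sf i + 1 / sg i
  have hcorr : ∀ j, Tendsto (fun γ : ℝ => 1 / sg j * exp (-(γ / sf j)) *
      ((∫ β in (0 : ℝ)..γ, exp (-(β / sg j)) * ∏ i ∈ univ.erase j, (1 - exp (-(a i * β)))) /
        γ ^ (n + 1))) (𝓝[>] 0) (𝓝 (1 / sg j * ((∏ i ∈ univ.erase j, a i) / (n + 1)))) := by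
    intro j
    have hcard : #(univ.erase j) = n := by simp
    simpa [hcard] using ((tendsto_exp_neg_div_nhdsGT_zero (sf j)).const_mul (1 / sg j)).mul
      (tendsto_integral_exp_neg_div_mul_prod_div_pow (sg j) (univ.erase j) a)
  have hlim := (tendsto_prod_one_sub_exp_neg_mul_div_pow univ a).sub
    (tendsto_finsetSum univ fun j _ => hcorr j)
  convert hlim using 2 with γ
  · simp_rw [sub_div, sum_div, mul_div_assoc]
    simp [a]
  · simpa [a] using (prod_sub_sum_div_card_eq sf sg hsf hsg).symm
end

section
/- If X is exponential with mean σ_{f₀}² and Y is a nonnegative random variable independent of X with density bounded by f_Y(y) ≤ N y^{N−1} C for a constant C > 0, then for the non-orthogonal combining outage event, P(X < μ_l and Y < β(X)) ≤ (μ_l/σ_{f₀}²) · μ_{l−k}^N · C, where β(x) = 2^{R/(l−k)}/(ρ(1+ρx)^{k/(l−k)}) − x − 1/ρ and μ_j = (2^{R/j}−1)/ρ, for integers 1 ≤ k < l. -/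
/-!
Since `β` is decreasing on `[0, ∞)`, `β (X) ≤ β 0 = μ (l - k)`, so the outage event lies in
`{X < μ l} ∩ {Y < μ (l - k)}`, whose probability factorises by independence. The exponential
tail gives `P (X < a) = 1 - exp (-a / σ²) ≤ a / σ²`, and the density bound gives
`P (Y < b) ≤ ∫₀ᵇ N y ^ (N - 1) C dy = b ^ N C`.
-/

open MeasureTheory ProbabilityTheory Real Set

theorem div_mul_one_add_rpow_sub_sub_le {ρ c e x : ℝ} (hρ : 0 < ρ) (hc : 0 ≤ c) (he : 0 ≤ e)
    (hx : 0 ≤ x) : c / (ρ * (1 + ρ * x) ^ e) - x - 1 / ρ ≤ (c - 1) / ρ := by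
  have hpow : 1 ≤ (1 + ρ * x) ^ e := one_le_rpow (by nlinarith) he
  have : c / (ρ * (1 + ρ * x) ^ e) ≤ c / ρ :=
    div_le_div_of_nonneg_left hc hρ (le_mul_of_one_le_right hρ.le hpow)
  rw [sub_div]
  linarith

theorem measureReal_lt_le_div_of_measureReal_gt_eq_exp {Ω : Type*} [MeasurableSpace Ω]
    {P : Measure Ω} [IsProbabilityMeasure P] {X : Ω → ℝ} (hX : Measurable X) {a s : ℝ}
    (htail : P.real {ω | a < X ω} = exp (-(a / s))) : P.real {ω | X ω < a} ≤ a / s := by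
  have hcompl : {ω | X ω < a} ⊆ {ω | a < X ω}ᶜ := fun ω (hω : X ω < a) => not_lt.2 hω.le
  calc P.real {ω | X ω < a} ≤ P.real {ω | a < X ω}ᶜ := measureReal_mono hcompl
    _ = 1 - exp (-(a / s)) := by
      rw [probReal_compl_eq_one_sub (measurableSet_lt measurable_const hX), htail]
    _ ≤ a / s := by linarith [one_sub_le_exp_neg (a / s)]

theorem integral_natCast_mul_pow_sub_one (a b : ℝ) (n : ℕ) :
    ∫ x in a..b, (n : ℝ) * x ^ (n - 1) = b ^ n - a ^ n :=
  intervalIntegral.integral_eq_sub_of_hasDerivAt (fun x _ => hasDerivAt_pow n x)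
    ((by fun_prop : Continuous fun x : ℝ => (n : ℝ) * x ^ (n - 1)).intervalIntegrable _ _)

theorem measureReal_lt_le_of_density_le_natCast_mul_pow {Ω : Type*} [MeasurableSpace Ω]
    {P : Measure Ω} {Y : Ω → ℝ} (hY : Measurable Y) (hYnonneg : ∀ ω, 0 ≤ Y ω) {fY : ℝ → ℝ}
    (hdens : P.map Y = volume.withDensity fun y => ENNReal.ofReal (fY y)) {N : ℕ} {C b : ℝ}
    (hC : 0 ≤ C) (hb : 0 ≤ b) (hbound : ∀ y, 0 ≤ y → fY y ≤ N * y ^ (N - 1) * C) :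
    P.real {ω | Y ω < b} ≤ b ^ N * C := by
  have hsub : {ω | Y ω < b} ⊆ Y ⁻¹' Icc 0 b := fun ω hω => ⟨hYnonneg ω, le_of_lt hω⟩
  have hint : IntegrableOn (fun y : ℝ => N * y ^ (N - 1) * C) (Ioc 0 b) :=
    (by fun_prop : Continuous fun y : ℝ => N * y ^ (N - 1) * C).integrableOn_Ioc
  have hmass : P {ω | Y ω < b} ≤ ENNReal.ofReal (b ^ N * C) :=
    calc P {ω | Y ω < b} ≤ P.map Y (Icc 0 b) := by
          rw [Measure.map_apply hY measurableSet_Icc]; exact measure_mono hsub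
      _ = ∫⁻ y in Ioc 0 b, ENNReal.ofReal (fY y) := by
          rw [hdens, withDensity_apply _ measurableSet_Icc, setLIntegral_congr Ioc_ae_eq_Icc.symm]
      _ ≤ ∫⁻ y in Ioc 0 b, ENNReal.ofReal (N * y ^ (N - 1) * C) :=
          setLIntegral_mono (by fun_prop) fun y hy => ENNReal.ofReal_le_ofReal (hbound y hy.1.le)
      _ = ENNReal.ofReal (∫ y in (0)..b, N * y ^ (N - 1) * C) := by
          rw [intervalIntegral.integral_of_le hb, ofReal_integral_eq_lintegral_ofReal hint]
          filter_upwards [ae_restrict_mem measurableSet_Ioc] with y hy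
          have := hy.1.le
          positivity
      _ = ENNReal.ofReal ((b ^ N - 0 ^ N) * C) := by
          rw [intervalIntegral.integral_mul_const, integral_natCast_mul_pow_sub_one]
      _ ≤ ENNReal.ofReal (b ^ N * C) := by
          gcongr
          exact sub_le_self _ (pow_nonneg le_rfl N)
  exact ENNReal.toReal_le_of_le_ofReal (by positivity) hmass

theorem combining_outage_bound_general
    {Ω : Type*} [MeasurableSpace Ω] (P : Measure Ω) [IsProbabilityMeasure P]
    (X Y : Ω → ℝ) (hX : Measurable X) (hY : Measurable Y)
    (hind : IndepFun X Y P)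
    (sf0 ρ R C : ℝ) (hρ : 0 < ρ) (hR : 0 < R) (hC : 0 < C)
    (N : ℕ)
    (hXpos : ∀ ω, 0 ≤ X ω) (hYpos : ∀ ω, 0 ≤ Y ω)
    (hXexp : ∀ x : ℝ, 0 ≤ x → (P {ω | x < X ω}).toReal = Real.exp (-(x / sf0)))
    (fY : ℝ → ℝ)
    (hdens : Measure.map Y P
      = MeasureTheory.volume.withDensity (fun y => ENNReal.ofReal (fY y)))
    (hbound : ∀ y : ℝ, 0 ≤ y → fY y ≤ (N:ℝ) * y^(N-1) * C)
    (k l : ℕ) (hkl : k < l)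
    (μ : ℕ → ℝ) (hμ : ∀ j, μ j = ((2:ℝ) ^ (R / (j:ℝ)) - 1) / ρ)
    (β : ℝ → ℝ)
    (hβ : ∀ x : ℝ, β x = (2:ℝ) ^ (R / ((l:ℝ) - (k:ℝ)))
        / (ρ * (1 + ρ * x) ^ ((k:ℝ) / ((l:ℝ) - (k:ℝ)))) - x - 1/ρ) :
    (P {ω | X ω < μ l ∧ Y ω < β (X ω)}).toReal
      ≤ (μ l / sf0) * (μ (l-k))^N * C := by
  have hμ_nonneg (j : ℕ) : 0 ≤ μ j := by
    rw [hμ]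
    exact div_nonneg (sub_nonneg.2 (one_le_rpow one_le_two (by positivity))) hρ.le
  have hβ_le (x : ℝ) (hx : 0 ≤ x) : β x ≤ μ (l - k) := by
    rw [hβ, hμ, Nat.cast_sub hkl.le]
    have hlk : 0 ≤ (l : ℝ) - k := sub_nonneg.2 (by exact_mod_cast hkl.le)
    exact div_mul_one_add_rpow_sub_sub_le hρ (by positivity) (by positivity) hx
  have hsub : {ω | X ω < μ l ∧ Y ω < β (X ω)} ⊆ X ⁻¹' Iio (μ l) ∩ Y ⁻¹' Iio (μ (l - k)) :=
    fun ω hω => ⟨hω.1, hω.2.trans_le (hβ_le _ (hXpos ω))⟩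
  have hX_lt := measureReal_lt_le_div_of_measureReal_gt_eq_exp hX (hXexp _ (hμ_nonneg l))
  have hY_lt := measureReal_lt_le_of_density_le_natCast_mul_pow hY hYpos hdens hC.le
    (hμ_nonneg (l - k)) hbound
  calc P.real {ω | X ω < μ l ∧ Y ω < β (X ω)}
      ≤ P.real (X ⁻¹' Iio (μ l) ∩ Y ⁻¹' Iio (μ (l - k))) := measureReal_mono hsub
    _ = P.real {ω | X ω < μ l} * P.real {ω | Y ω < μ (l - k)} := by
      simp only [measureReal_def,
        hind.measure_inter_preimage_eq_mul _ _ measurableSet_Iio measurableSet_Iio,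
        ENNReal.toReal_mul]
      rfl
    _ ≤ (μ l / sf0) * ((μ (l - k)) ^ N * C) :=
      mul_le_mul hX_lt hY_lt measureReal_nonneg (measureReal_nonneg.trans hX_lt)
    _ = (μ l / sf0) * (μ (l - k)) ^ N * C := by ring

/-- Bound (37) on the non-orthogonal combining outage probability. -/
theorem combining_outage_bound
    {Ω : Type*} [MeasurableSpace Ω] (P : Measure Ω) [IsProbabilityMeasure P]
    (X Y : Ω → ℝ) (hX : Measurable X) (hY : Measurable Y)
    (hind : IndepFun X Y P)
    (sf0 ρ R C : ℝ) (hsf0 : 0 < sf0) (hρ : 0 < ρ) (hR : 0 < R) (hC : 0 < C)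
    (N : ℕ) (hN : 1 ≤ N)
    (hXpos : ∀ ω, 0 ≤ X ω) (hYpos : ∀ ω, 0 ≤ Y ω)
    (hXexp : ∀ x : ℝ, 0 ≤ x → (P {ω | x < X ω}).toReal = Real.exp (-(x / sf0)))
    (fY : ℝ → ℝ)
    (hdens : Measure.map Y P
      = MeasureTheory.volume.withDensity (fun y => ENNReal.ofReal (fY y)))
    (hbound : ∀ y : ℝ, 0 ≤ y → fY y ≤ (N:ℝ) * y^(N-1) * C)
    (k l : ℕ) (hk : 1 ≤ k) (hkl : k < l)
    (μ : ℕ → ℝ) (hμ : ∀ j, μ j = ((2:ℝ) ^ (R / (j:ℝ)) - 1) / ρ)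
    (β : ℝ → ℝ)
    (hβ : ∀ x : ℝ, β x = (2:ℝ) ^ (R / ((l:ℝ) - (k:ℝ)))
        / (ρ * (1 + ρ * x) ^ ((k:ℝ) / ((l:ℝ) - (k:ℝ)))) - x - 1/ρ) :
    (P {ω | X ω < μ l ∧ Y ω < β (X ω)}).toReal
      ≤ (μ l / sf0) * (μ (l-k))^N * C :=
  combining_outage_bound_general P X Y hX hY hind sf0 ρ R C hρ hR hC N hXpos hYpos hXexp fY hdens
    hbound k l hkl μ hμ β hβ
end

section
/- Long-term vs delay-limited throughput: with P_out(0)=1 and P_out nonincreasing with values in [0,1], the long-term throughput Ḡ_LT = R/Σ_{l=0}^{L−1} P_out(l) and the delay-limited throughput Ḡ_DL = Σ_{l=1}^{L} (R/l)(P_out(l−1)−P_out(l)) satisfy Ḡ_DL ≥ Ḡ_LT·(1 − P_out(L))·(Σ_{l=0}^{L−1}P_out(l))/L; in particular when P_out(l) = 0 for 1 ≤ l ≤ L, both equal R. -/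
/-!
The differences `Pout (l-1) - Pout l` are nonnegative and telescope to `1 - Pout L`, so replacing
each weight `R / l` by the smaller `R / L` bounds `Ḡ_DL` below by `R / L * (1 - Pout L)`, which is
the left-hand side once `Ḡ_LT` is multiplied back by the sum it divides. If `Pout` vanishes on
`1, …, L`, only the `l = 1` term of `Ḡ_DL` and the `l = 0` term of the sum survive.
-/

open Finset

theorem sum_Icc_one_sub_eq (f : ℕ → ℝ) (L : ℕ) :
    ∑ l ∈ Icc 1 L, (f (l - 1) - f l) = f 0 - f L := by
  induction L with
  | zero => simp
  | succ L ih => rw [sum_Icc_succ_top (by omega), ih, Nat.add_sub_cancel]; ring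

section

variable {f : ℕ → ℝ} {L : ℕ}

theorem sub_nonneg_of_succ_le (hf : ∀ l, l < L → f (l + 1) ≤ f l) :
    ∀ l ∈ Icc 1 L, 0 ≤ f (l - 1) - f l := by
  intro l hl
  obtain ⟨hl1, hlL⟩ := mem_Icc.mp hl
  have := hf (l - 1) (by omega)
  rw [Nat.sub_add_cancel hl1] at this
  linarith

theorem div_mul_sub_le_sum_div_mul_sub {c : ℝ} (hc : 0 ≤ c)
    (hf : ∀ l, l < L → f (l + 1) ≤ f l) :
    c / L * (f 0 - f L) ≤ ∑ l ∈ Icc 1 L, c / l * (f (l - 1) - f l) := by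
  rw [← sum_Icc_one_sub_eq, mul_sum]
  refine sum_le_sum fun l hl => mul_le_mul_of_nonneg_right ?_ (sub_nonneg_of_succ_le hf l hl)
  obtain ⟨hl1, hlL⟩ := mem_Icc.mp hl
  exact div_le_div_of_nonneg_left hc (by exact_mod_cast hl1) (by exact_mod_cast hlL)

theorem sum_range_eq_of_eq_zero (hL : 1 ≤ L) (hz : ∀ l, 1 ≤ l → l ≤ L → f l = 0) :
    ∑ l ∈ range L, f l = f 0 :=
  sum_eq_single_of_mem 0 (mem_range.mpr hL) fun l hl hl0 =>
    hz l (Nat.one_le_iff_ne_zero.mpr hl0) (mem_range.mp hl).le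

theorem sum_Icc_div_mul_sub_eq_of_eq_zero (c : ℝ) (hL : 1 ≤ L)
    (hz : ∀ l, 1 ≤ l → l ≤ L → f l = 0) :
    ∑ l ∈ Icc 1 L, c / l * (f (l - 1) - f l) = c * f 0 := by
  rw [sum_eq_single_of_mem 1 (mem_Icc.mpr ⟨le_rfl, hL⟩)]
  · simp [hz 1 le_rfl hL]
  · intro l hl hl1
    obtain ⟨hl1', hlL⟩ := mem_Icc.mp hl
    simp [hz l hl1' hlL, hz (l - 1) (by omega) (by omega)]

end

-- Also true for `s = 0`, where the left side is `0` since `a / 0 = 0`.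
theorem div_mul_mul_div_le_div_mul {a x s n : ℝ} (ha : 0 ≤ a) (hx : 0 ≤ x) (hn : 0 ≤ n) :
    a / s * x * s / n ≤ a / n * x := by
  rcases eq_or_ne s 0 with rfl | hs
  · simp only [div_zero, zero_mul, mul_zero, zero_div]; positivity
  · rw [mul_right_comm, div_mul_cancel₀ a hs, div_mul_eq_mul_div]

theorem long_term_vs_delay_limited_throughput_general
    (L : ℕ) (hL : 1 ≤ L) (R : ℝ) (hR : 0 < R)
    (Pout : ℕ → ℝ) (h0 : Pout 0 = 1)
    (hmono : ∀ l, l < L → Pout (l+1) ≤ Pout l) :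
    ((R / ∑ l ∈ Finset.range L, Pout l) * (1 - Pout L)
        * (∑ l ∈ Finset.range L, Pout l) / (L:ℝ)
      ≤ ∑ l ∈ Finset.Icc 1 L, (R / (l:ℝ)) * (Pout (l-1) - Pout l)) ∧
    ((∀ l, 1 ≤ l → l ≤ L → Pout l = 0) →
      (∑ l ∈ Finset.Icc 1 L, (R / (l:ℝ)) * (Pout (l-1) - Pout l) = R ∧
       R / ∑ l ∈ Finset.range L, Pout l = R)) := by
  refine ⟨?_, fun hz => ?_⟩
  · have hdrop : 0 ≤ Pout 0 - Pout L := by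
      rw [← sum_Icc_one_sub_eq]
      exact sum_nonneg (sub_nonneg_of_succ_le hmono)
    calc _ ≤ R / L * (Pout 0 - Pout L) := by
          rw [← h0]
          exact div_mul_mul_div_le_div_mul hR.le hdrop L.cast_nonneg
      _ ≤ _ := div_mul_sub_le_sum_div_mul_sub hR.le hmono
  · rw [sum_Icc_div_mul_sub_eq_of_eq_zero R hL hz, sum_range_eq_of_eq_zero hL hz, h0]
    exact ⟨mul_one R, div_one R⟩

/-- Long-term vs delay-limited throughput comparison. -/
theorem long_term_vs_delay_limited_throughput
    (L : ℕ) (hL : 1 ≤ L) (R : ℝ) (hR : 0 < R)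
    (Pout : ℕ → ℝ) (h0 : Pout 0 = 1)
    (hmono : ∀ l, l < L → Pout (l+1) ≤ Pout l)
    (hrange : ∀ l, l ≤ L → 0 ≤ Pout l ∧ Pout l ≤ 1) :
    ((R / ∑ l ∈ Finset.range L, Pout l) * (1 - Pout L)
        * (∑ l ∈ Finset.range L, Pout l) / (L:ℝ)
      ≤ ∑ l ∈ Finset.Icc 1 L, (R / (l:ℝ)) * (Pout (l-1) - Pout l)) ∧
    ((∀ l, 1 ≤ l → l ≤ L → Pout l = 0) →
      (∑ l ∈ Finset.Icc 1 L, (R / (l:ℝ)) * (Pout (l-1) - Pout l) = R ∧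
       R / ∑ l ∈ Finset.range L, Pout l = R)) :=
  long_term_vs_delay_limited_throughput_general L hL R hR Pout h0 hmono
end
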